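/- Let x₀ ∈ D° and x ∈ D. Then for every w ∈ W one has dist(x₀, w x) ≥ dist(x₀, x), and the inequality is strict for every w ∈ W with w x ≠ x. -/

import Mathlib

open scoped RealInnerProductSpace

noncomputable section

/-- `g` is the orthogonal reflection in the affine hyperplane `{x | ⟪x, u⟫ = c}`. -/
def IsAffRefl {V : Type*} [NormedAddCommGroup V] [InnerProductSpace ℝ V]
    (g : V ≃ᵢ V) : Prop :=
  ∃ (u : V) (c : ℝ), u ≠ 0 ∧ ∀ x : V, g x = x - ((2 * (⟪x, u⟫ - c)) / ⟪u, u⟫) • u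

/-- The union of the reflection hyperplanes (mirrors) of the reflections belonging to `W`;
the mirror of a reflection is exactly its set of fixed points. -/
def affMirrors {V : Type*} [NormedAddCommGroup V] [InnerProductSpace ℝ V]
    (W : Subgroup (V ≃ᵢ V)) : Set V :=
  ⋃ g ∈ {g : V ≃ᵢ V | g ∈ W ∧ IsAffRefl g}, {x : V | g x = x}

/-!
Let `C` be the component of the complement of the mirrors whose closure is `D`, and let
`z, y ∈ C`. By proper discontinuity some `w₀ y` is nearest to `z` in the orbit `W y`. It lies
weakly on the side of `z` of every mirror, since otherwise the reflection in that mirror would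
bring it closer, so the half-open segment from `w₀ y` to `z` misses all mirrors and
`w₀ y ∈ closure C`; as the translates of `D°` are disjoint, `w₀ = 1`. Hence `dist z y ≤ dist z (w y)` for `z, y ∈ C`, and by continuity for `z, y ∈ D`.
For strictness, `z ↦ dist z (w x) ^ 2 - dist z x ^ 2` is affine and nonnegative on `D`; if it
vanished at the interior point `x₀` it would be constant, which forces `w x = x`.
-/

open Set Filter Topology

section Topology

lemma mem_closure_connectedComponentIn_of_lineMap_mem {E : Type*} [AddCommGroup E]
    [Module ℝ E] [TopologicalSpace E] [IsTopologicalAddGroup E] [ContinuousSMul ℝ E]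
    {F : Set E} {y z : E}
    (h : ∀ t ∈ Ioc (0 : ℝ) 1, AffineMap.lineMap (k := ℝ) y z t ∈ F) :
    y ∈ closure (connectedComponentIn F z) := by
  set φ : ℝ → E := ⇑(AffineMap.lineMap (k := ℝ) y z)
  have hφ : Continuous φ := AffineMap.lineMap_continuous
  have hsub : φ '' Ioc 0 1 ⊆ connectedComponentIn F z :=
    (isPreconnected_Ioc.image _ hφ.continuousOn).subset_connectedComponentIn
      ⟨1, right_mem_Ioc.2 one_pos, AffineMap.lineMap_apply_one y z⟩ (image_subset_iff.2 h)
  refine closure_mono hsub (mem_closure_of_tendsto (f := φ) (b := 𝓝[>] (0 : ℝ)) ?_ ?_)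
  · simpa [φ] using (hφ.tendsto 0).mono_left nhdsWithin_le_nhds
  · filter_upwards [Ioc_mem_nhdsGT (zero_lt_one' ℝ)] with t ht using mem_image_of_mem φ ht

variable {X : Type*} [PseudoMetricSpace X]

lemma IsometryEquiv.eq_one_of_apply_mem_closure {W : Subgroup (X ≃ᵢ X)} {U : Set X}
    (hU : IsOpen U) (hdisj : ∀ w ∈ W, ∀ w' ∈ W, w ≠ w' → ∀ x ∈ U, ∀ x' ∈ U, w x ≠ w' x')
    {w : X ≃ᵢ X} (hw : w ∈ W) {x : X} (hx : x ∈ U) (hwx : w x ∈ closure U) : w = 1 := by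
  by_contra hne
  obtain ⟨q, hq, hqU⟩ := mem_closure_iff.1 hwx _ (hU.preimage w.symm.continuous)
    (by simpa using hx)
  exact hdisj w hw 1 W.one_mem hne _ hq q hqU (by simp)

lemma exists_forall_dist_apply_le [ProperSpace X] {W : Subgroup (X ≃ᵢ X)}
    (hpd : ∀ K : Set X, IsCompact K → {g : X ≃ᵢ X | g ∈ W ∧ ∃ x ∈ K, g x ∈ K}.Finite)
    (z y : X) : ∃ w₀ ∈ W, ∀ g ∈ W, dist z (w₀ y) ≤ dist z (g y) := by
  set K := Metric.closedBall z (dist z y)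
  have hyK : y ∈ K := Metric.mem_closedBall.2 (dist_comm y z).le
  have hfin : {g : X ≃ᵢ X | g ∈ W ∧ g y ∈ K}.Finite :=
    (hpd K (isCompact_closedBall z _)).subset fun g hg => ⟨hg.1, y, hyK, hg.2⟩
  obtain ⟨w₀, ⟨hw₀, hw₀K⟩, hmin⟩ :=
    exists_min_image _ (fun g => dist z (g y)) hfin ⟨1, W.one_mem, hyK⟩
  refine ⟨w₀, hw₀, fun g hg => ?_⟩
  by_cases hgK : g y ∈ K
  · exact hmin g ⟨hg, hgK⟩
  · calc dist z (w₀ y) ≤ dist z y := by simpa [K, dist_comm] using hw₀K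
      _ ≤ dist z (g y) := by
        rw [Metric.mem_closedBall, dist_comm, not_le] at hgK
        exact hgK.le

lemma dist_le_dist_apply_of_mem_closure {s : Set X} {w : X → X} (hw : Continuous w)
    (h : ∀ z ∈ s, ∀ y ∈ s, dist z y ≤ dist z (w y))
    {z y : X} (hz : z ∈ closure s) (hy : y ∈ closure s) : dist z y ≤ dist z (w y) := by
  have hzy : (z, y) ∈ closure (s ×ˢ s) := by
    rw [closure_prod_eq]; exact ⟨hz, hy⟩
  exact closure_minimal (fun p hp => h p.1 hp.1 p.2 hp.2)
    (isClosed_le continuous_dist (continuous_fst.dist (hw.comp continuous_snd))) hzy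

end Topology

section InnerProductSpace

variable {V : Type*} [NormedAddCommGroup V] [InnerProductSpace ℝ V]

lemma eq_of_forall_dist_le_of_mem_interior {s : Set V} {x₀ a b : V} (hx₀ : x₀ ∈ interior s)
    (h : ∀ z ∈ s, dist z a ≤ dist z b) (h₀ : dist x₀ b ≤ dist x₀ a) : a = b := by
  by_contra hab
  have hev : ∀ᶠ t in 𝓝[>] (0 : ℝ), x₀ + t • (b - a) ∈ s := by
    have : Tendsto (fun t : ℝ => x₀ + t • (b - a)) (𝓝 0) (𝓝 x₀) := by
      simpa using (show Continuous fun t : ℝ => x₀ + t • (b - a) by fun_prop).tendsto 0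
    exact (this.mono_left nhdsWithin_le_nhds).eventually (mem_interior_iff_mem_nhds.1 hx₀)
  obtain ⟨t, hts, ht⟩ := (hev.and self_mem_nhdsWithin).exists
  set z := x₀ + t • (b - a)
  have hsq : dist z b ^ 2 - dist z a ^ 2
      = dist x₀ b ^ 2 - dist x₀ a ^ 2 - 2 * t * ‖b - a‖ ^ 2 := by
    simp only [z, dist_eq_norm, ← real_inner_self_eq_norm_sq, inner_add_left, inner_add_right,
      inner_sub_left, inner_sub_right, real_inner_smul_left, real_inner_smul_right,
      real_inner_comm a b, real_inner_comm a x₀, real_inner_comm b x₀]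
    ring
  have hba : 0 < ‖b - a‖ := norm_pos_iff.2 (sub_ne_zero.2 (Ne.symm hab))
  have hz_sq := pow_le_pow_left₀ dist_nonneg (h z hts) 2
  have hx₀_sq := pow_le_pow_left₀ dist_nonneg h₀ 2
  linarith [mul_pos ht (pow_pos hba 2)]

def IsAffReflIn (g : V ≃ᵢ V) (u : V) (c : ℝ) : Prop :=
  u ≠ 0 ∧ ∀ x : V, g x = x - ((2 * (⟪x, u⟫ - c)) / ⟪u, u⟫) • u

lemma isAffRefl_iff {g : V ≃ᵢ V} : IsAffRefl g ↔ ∃ u c, IsAffReflIn g u c :=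
  Iff.rfl

namespace IsAffReflIn

variable {g : V ≃ᵢ V} {u : V} {c : ℝ}

lemma apply_eq_self_iff (hg : IsAffReflIn g u c) {p : V} : g p = p ↔ ⟪p, u⟫ = c := by
  rw [hg.2 p, sub_eq_self, smul_eq_zero, div_eq_zero_iff, or_iff_left hg.1,
    or_iff_left (inner_self_ne_zero.2 hg.1), mul_eq_zero, sub_eq_zero]
  norm_num

lemma dist_apply_sq (hg : IsAffReflIn g u c) (z y : V) :
    dist z (g y) ^ 2 = dist z y ^ 2 + 4 * ((⟪z, u⟫ - c) * (⟪y, u⟫ - c)) / ⟪u, u⟫ := by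
  have hU : ⟪u, u⟫ ≠ 0 := inner_self_ne_zero.2 hg.1
  have h1 : z - g y = (z - y) + ((2 * (⟪y, u⟫ - c)) / ⟪u, u⟫) • u := by
    rw [hg.2 y]; abel
  rw [dist_eq_norm, dist_eq_norm, h1, norm_add_sq_real, real_inner_smul_right,
    inner_sub_left, norm_smul, mul_pow, Real.norm_eq_abs, sq_abs,
    ← real_inner_self_eq_norm_sq u]
  field_simp
  ring

lemma dist_le_dist_apply_iff (hg : IsAffReflIn g u c) {z y : V} :
    dist z y ≤ dist z (g y) ↔ 0 ≤ (⟪z, u⟫ - c) * (⟪y, u⟫ - c) := by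
  rw [← pow_le_pow_iff_left₀ dist_nonneg dist_nonneg two_ne_zero, hg.dist_apply_sq,
    le_add_iff_nonneg_right, le_div_iff₀ (real_inner_self_pos.2 hg.1), zero_mul,
    mul_nonneg_iff_of_pos_left four_pos]

end IsAffReflIn

section Chamber

def affChamber (W : Subgroup (V ≃ᵢ V)) (p : V) : Set V :=
  connectedComponentIn (affMirrors W)ᶜ p

variable {W : Subgroup (V ≃ᵢ V)}

lemma mem_affMirrors {p : V} : p ∈ affMirrors W ↔ ∃ g ∈ W, IsAffRefl g ∧ g p = p := by
  simp [affMirrors, and_assoc]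

lemma isClosed_affMirrors
    (hlf : LocallyFinite fun g : {g : V ≃ᵢ V // g ∈ W ∧ IsAffRefl g} => {x : V | g.1 x = x}) :
    IsClosed (affMirrors W) := by
  rw [affMirrors, biUnion_eq_iUnion]
  exact hlf.isClosed_iUnion fun g => isClosed_eq g.1.continuous continuous_id

lemma isOpen_affChamber
    (hlf : LocallyFinite fun g : {g : V ≃ᵢ V // g ∈ W ∧ IsAffRefl g} => {x : V | g.1 x = x})
    (p : V) : IsOpen (affChamber W p) :=
  (isClosed_affMirrors hlf).isOpen_compl.connectedComponentIn

lemma mem_closure_affChamber_of_forall_dist_le {z y : V} (hz : z ∉ affMirrors W)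
    (h : ∀ g ∈ W, IsAffRefl g → dist z y ≤ dist z (g y)) :
    y ∈ closure (affChamber W z) := by
  refine mem_closure_connectedComponentIn_of_lineMap_mem fun t ht hM => ?_
  obtain ⟨g, hgW, hrefl, hfix⟩ := mem_affMirrors.1 hM
  obtain ⟨u, c, hg⟩ := isAffRefl_iff.1 hrefl
  have hzu : ⟪z, u⟫ - c ≠ 0 := fun h0 =>
    hz (mem_affMirrors.2 ⟨g, hgW, hrefl, hg.apply_eq_self_iff.2 (sub_eq_zero.1 h0)⟩)
  have hzy : 0 ≤ (⟪z, u⟫ - c) * (⟪y, u⟫ - c) :=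
    hg.dist_le_dist_apply_iff.1 (h g hgW hrefl)
  have hline : (⟪z, u⟫ - c) * (⟪AffineMap.lineMap y z t, u⟫ - c)
      = (1 - t) * ((⟪z, u⟫ - c) * (⟪y, u⟫ - c)) + t * ((⟪z, u⟫ - c) * (⟪z, u⟫ - c)) := by
    rw [AffineMap.lineMap_apply_module]
    simp only [inner_add_left, real_inner_smul_left]
    ring
  rw [sub_eq_zero.2 (hg.apply_eq_self_iff.1 hfix), mul_zero] at hline
  linarith [mul_nonneg (sub_nonneg.2 ht.2) hzy, mul_pos ht.1 (mul_self_pos.2 hzu)]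

lemma dist_le_dist_apply_of_mem_affChamber [FiniteDimensional ℝ V]
    (hlf : LocallyFinite fun g : {g : V ≃ᵢ V // g ∈ W ∧ IsAffRefl g} => {x : V | g.1 x = x})
    (hpd : ∀ K : Set V, IsCompact K → {g : V ≃ᵢ V | g ∈ W ∧ ∃ x ∈ K, g x ∈ K}.Finite)
    {p : V} (hdisj : ∀ w ∈ W, ∀ w' ∈ W, w ≠ w' →
      ∀ x ∈ interior (closure (affChamber W p)), ∀ x' ∈ interior (closure (affChamber W p)),
        w x ≠ w' x')
    {z y : V} (hz : z ∈ affChamber W p) (hy : y ∈ affChamber W p) {w : V ≃ᵢ V}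
    (hw : w ∈ W) : dist z y ≤ dist z (w y) := by
  have hCint : affChamber W p ⊆ interior (closure (affChamber W p)) :=
    (isOpen_affChamber hlf p).subset_interior_closure
  obtain ⟨w₀, hw₀, hmin⟩ := exists_forall_dist_apply_le hpd z y
  have hw₀y : w₀ y ∈ closure (affChamber W p) := by
    rw [affChamber, connectedComponentIn_eq hz]
    exact mem_closure_affChamber_of_forall_dist_le (connectedComponentIn_subset _ _ hz)
      fun g hg _ => hmin (g * w₀) (W.mul_mem hg hw₀)
  obtain rfl : w₀ = 1 := IsometryEquiv.eq_one_of_apply_mem_closure isOpen_interior hdisj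
    hw₀ (hCint hy) (closure_mono hCint hw₀y)
  exact hmin w hw

end Chamber

end InnerProductSpace

theorem dist_le_orbit_dist_affine_general {V : Type*} [NormedAddCommGroup V] [InnerProductSpace ℝ V]
    [FiniteDimensional ℝ V]
    (W : Subgroup (V ≃ᵢ V)) (D : Set V)
    (hlf : LocallyFinite fun g : {g : V ≃ᵢ V // g ∈ W ∧ IsAffRefl g} => {x : V | g.1 x = x})
    (hpd : ∀ K : Set V, IsCompact K → {g : V ≃ᵢ V | g ∈ W ∧ ∃ x ∈ K, g x ∈ K}.Finite)
    (hD : ∃ x₀ ∈ (affMirrors W)ᶜ, D = closure (connectedComponentIn (affMirrors W)ᶜ x₀))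
    (hdisj : ∀ w ∈ W, ∀ w' ∈ W, w ≠ w' →
      ∀ x ∈ interior D, ∀ x' ∈ interior D, w x ≠ w' x')
    (x₀ x : V) (hx₀ : x₀ ∈ interior D) (hx : x ∈ D) :
    (∀ w ∈ W, dist x₀ x ≤ dist x₀ (w x)) ∧
    (∀ w ∈ W, w x ≠ x → dist x₀ x < dist x₀ (w x)) := by
  obtain ⟨p, -, rfl⟩ := hD
  have horbit : ∀ w ∈ W, ∀ z ∈ closure (affChamber W p), ∀ y ∈ closure (affChamber W p),
      dist z y ≤ dist z (w y) := fun w hw _ hz _ hy =>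
    dist_le_dist_apply_of_mem_closure w.continuous
      (fun _ hz _ hy => dist_le_dist_apply_of_mem_affChamber hlf hpd hdisj hz hy hw) hz hy
  refine ⟨fun w hw => horbit w hw x₀ (interior_subset hx₀) x hx, fun w hw hne => ?_⟩
  by_contra! hle
  exact hne (eq_of_forall_dist_le_of_mem_interior hx₀ (fun z hz => horbit w hw z hz x hx) hle).symm

/-- For points `x₀` in the interior of the fundamental domain `D` and `x ∈ D`, every
`w ∈ W` satisfies `dist x₀ (w x) ≥ dist x₀ x`, strictly whenever `w x ≠ x`. -/
theorem dist_le_orbit_dist_affine {V : Type*} [NormedAddCommGroup V] [InnerProductSpace ℝ V]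
    [FiniteDimensional ℝ V]
    (W : Subgroup (V ≃ᵢ V)) (D : Set V)
    (hWgen : Subgroup.closure {g : V ≃ᵢ V | g ∈ W ∧ IsAffRefl g} = W)
    (hlf : LocallyFinite fun g : {g : V ≃ᵢ V // g ∈ W ∧ IsAffRefl g} => {x : V | g.1 x = x})
    (hpd : ∀ K : Set V, IsCompact K → {g : V ≃ᵢ V | g ∈ W ∧ ∃ x ∈ K, g x ∈ K}.Finite)
    (hD : ∃ x₀ ∈ (affMirrors W)ᶜ, D = closure (connectedComponentIn (affMirrors W)ᶜ x₀))
    (hDcpt : IsCompact D)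
    (hcover : ∀ v : V, ∃ w ∈ W, ∃ x ∈ D, w x = v)
    (hdisj : ∀ w ∈ W, ∀ w' ∈ W, w ≠ w' →
      ∀ x ∈ interior D, ∀ x' ∈ interior D, w x ≠ w' x')
    (x₀ x : V) (hx₀ : x₀ ∈ interior D) (hx : x ∈ D) :
    (∀ w ∈ W, dist x₀ x ≤ dist x₀ (w x)) ∧
    (∀ w ∈ W, w x ≠ x → dist x₀ x < dist x₀ (w x)) :=
  dist_le_orbit_dist_affine_general W D hlf hpd hD hdisj x₀ x hx₀ hx
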